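/- arXiv:2510.15040 — 3 statements merged into one kernel-verified Lean document; each statement's English description precedes it below -/
import Mathlib

section
/- Let Ω be a measurable space, r_f : Ω → ℝ a measurable function taking values in {0, 1}, r_s : Ω → ℝ a measurable function taking values in [0, 1], λ ∈ (0, 1), and c ∈ ℝ with λ·c < 1. Let π₁, π₂ be probability measures on Ω such that for each i ∈ {1, 2}, ∫_{{ω : r_f(ω) = 0}} r_s dπᵢ = c · πᵢ({ω : r_f(ω) = 0}). With V_f(πᵢ) = ∫ r_f dπᵢ and E_i = ∫ max(r_f(ω), λ·r_s(ω)) dπᵢ(ω), the signs agree: sign(V_f(π₁) − V_f(π₂)) = sign(E₁ − E₂). (ProcessRM-max preserves policy order.) -/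
open MeasureTheory

lemma processRM_key {Ω : Type*} [MeasurableSpace Ω]
    (rf rs : Ω → ℝ) (hrf : Measurable rf) (hrs : Measurable rs)
    (hrf01 : ∀ ω, rf ω = 0 ∨ rf ω = 1)
    (hrs01 : ∀ ω, rs ω ∈ Set.Icc (0 : ℝ) 1)
    (lam : ℝ) (hlam : lam ∈ Set.Ioo (0 : ℝ) 1)
    (c : ℝ)
    (π : Measure Ω) [IsProbabilityMeasure π]
    (hc' : ∫ ω in {ω | rf ω = 0}, rs ω ∂π = c * (π {ω | rf ω = 0}).toReal) :
    ∫ ω, max (rf ω) (lam * rs ω) ∂π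
      = (1 - lam * c) * (∫ ω, rf ω ∂π) + lam * c := by
  set A : Set Ω := {ω | rf ω = 0} with hAdef
  have hA : MeasurableSet A := hrf (measurableSet_singleton 0)
  have hrfb : ∀ ω, |rf ω| ≤ 1 := by
    intro ω; rcases hrf01 ω with h | h <;> simp [h]
  have hrf_int : Integrable rf π := by
    refine (integrable_const (1:ℝ)).mono' hrf.aestronglyMeasurable ?_
    exact Filter.Eventually.of_forall hrfb
  have hg_meas : Measurable fun ω => max (rf ω) (lam * rs ω) :=
    hrf.max (measurable_const.mul hrs)
  have hg_int : Integrable (fun ω => max (rf ω) (lam * rs ω)) π := by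
    refine (integrable_const (1:ℝ)).mono' hg_meas.aestronglyMeasurable ?_
    refine Filter.Eventually.of_forall fun ω => ?_
    have h1 := (hrs01 ω).1
    have h2 := (hrs01 ω).2
    have hlrs : 0 ≤ lam * rs ω := mul_nonneg hlam.1.le h1
    have hlrs1 : lam * rs ω ≤ 1 := by nlinarith [hlam.2]
    rw [Real.norm_eq_abs, abs_of_nonneg (le_max_of_le_right hlrs)]
    rcases hrf01 ω with h | h <;> simp [h, max_le_iff, hlrs1]
  -- split integrals over A and Aᶜ
  have hsplit_g := (integral_add_compl hA hg_int).symm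
  have hsplit_f := (integral_add_compl hA hrf_int).symm
  have hgA : ∫ ω in A, max (rf ω) (lam * rs ω) ∂π = lam * (c * (π A).toReal) := by
    have : ∫ ω in A, max (rf ω) (lam * rs ω) ∂π = ∫ ω in A, lam * rs ω ∂π := by
      refine setIntegral_congr_fun hA fun ω hω => ?_
      have h0 : rf ω = 0 := hω
      have hlrs : 0 ≤ lam * rs ω := mul_nonneg hlam.1.le (hrs01 ω).1
      simp [h0, max_eq_right hlrs]
    rw [this, integral_const_mul, hc']
  have hgAc : ∫ ω in Aᶜ, max (rf ω) (lam * rs ω) ∂π = ∫ ω in Aᶜ, rf ω ∂π := by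
    refine setIntegral_congr_fun hA.compl fun ω hω => ?_
    have h1 : rf ω = 1 := by
      rcases hrf01 ω with h | h
      · exact absurd h hω
      · exact h
    have : lam * rs ω ≤ 1 := by nlinarith [(hrs01 ω).1, (hrs01 ω).2, hlam.1, hlam.2]
    simp [h1, max_eq_left this]
  have hfA : ∫ ω in A, rf ω ∂π = 0 := by
    have : ∫ ω in A, rf ω ∂π = ∫ ω in A, (0:ℝ) ∂π :=
      setIntegral_congr_fun hA fun ω hω => hω
    simp [this]
  have hfAc : ∫ ω in Aᶜ, rf ω ∂π = (π Aᶜ).toReal := by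
    have : ∫ ω in Aᶜ, rf ω ∂π = ∫ ω in Aᶜ, (1:ℝ) ∂π := by
      refine setIntegral_congr_fun hA.compl fun ω hω => ?_
      rcases hrf01 ω with h | h
      · exact absurd h hω
      · exact h
    simp [this]; rfl
  have hcompl : (π Aᶜ).toReal = 1 - (π A).toReal := by
    rw [measure_compl hA (measure_ne_top π A), measure_univ,
      ENNReal.toReal_sub_of_le prob_le_one (by simp)]
    simp
  have hVf : ∫ ω, rf ω ∂π = 1 - (π A).toReal := by
    rw [hsplit_f, hfA, hfAc, hcompl]; ring
  rw [hsplit_g, hgA, hgAc, hfAc, hcompl, hVf]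
  ring

/-- ProcessRM-max preserves policy order: the sign of the difference of the
final-answer values agrees with the sign of the difference of the expected
max-process rewards. -/
theorem processRM_max_sign_preserving {Ω : Type*} [MeasurableSpace Ω]
    (rf rs : Ω → ℝ) (hrf : Measurable rf) (hrs : Measurable rs)
    (hrf01 : ∀ ω, rf ω = 0 ∨ rf ω = 1)
    (hrs01 : ∀ ω, rs ω ∈ Set.Icc (0 : ℝ) 1)
    (lam : ℝ) (hlam : lam ∈ Set.Ioo (0 : ℝ) 1)
    (c : ℝ) (hc : lam * c < 1)
    (π₁ π₂ : Measure Ω) [IsProbabilityMeasure π₁] [IsProbabilityMeasure π₂]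
    (hc₁ : ∫ ω in {ω | rf ω = 0}, rs ω ∂π₁ = c * (π₁ {ω | rf ω = 0}).toReal)
    (hc₂ : ∫ ω in {ω | rf ω = 0}, rs ω ∂π₂ = c * (π₂ {ω | rf ω = 0}).toReal) :
    Real.sign ((∫ ω, rf ω ∂π₁) - (∫ ω, rf ω ∂π₂))
      = Real.sign ((∫ ω, max (rf ω) (lam * rs ω) ∂π₁)
          - (∫ ω, max (rf ω) (lam * rs ω) ∂π₂)) := by
  have k₁ := processRM_key rf rs hrf hrs hrf01 hrs01 lam hlam c π₁ hc₁
  have k₂ := processRM_key rf rs hrf hrs hrf01 hrs01 lam hlam c π₂ hc₂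
  have hdiff : (∫ ω, max (rf ω) (lam * rs ω) ∂π₁)
      - (∫ ω, max (rf ω) (lam * rs ω) ∂π₂)
      = (1 - lam * c) * ((∫ ω, rf ω ∂π₁) - (∫ ω, rf ω ∂π₂)) := by
    rw [k₁, k₂]; ring
  rw [hdiff]
  set d := (∫ ω, rf ω ∂π₁) - (∫ ω, rf ω ∂π₂)
  have hpos : 0 < 1 - lam * c := by linarith
  rcases lt_trichotomy d 0 with h | h | h
  · rw [Real.sign_of_neg h, Real.sign_of_neg (by nlinarith)]
  · rw [h, mul_zero]
  · rw [Real.sign_of_pos h, Real.sign_of_pos (by nlinarith)]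
end

section
/- Let Ω be a measurable space, r_f : Ω → ℝ a measurable function taking values in {0, 1}, r_s : Ω → ℝ a measurable function taking values in [0, 1], λ ∈ (0, 1), and c ∈ ℝ with λ·c < 1. Let π₁, π₂ be probability measures on Ω such that for each i ∈ {1, 2}, ∫_{{ω : r_f(ω) = 0}} r_s dπᵢ = c · πᵢ({ω : r_f(ω) = 0}). Then ∫ r_f dπ₁ > ∫ r_f dπ₂ if and only if ∫ max(r_f(ω), λ·r_s(ω)) dπ₁(ω) > ∫ max(r_f(ω), λ·r_s(ω)) dπ₂(ω). -/
open MeasureTheory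

lemma aux_value_eq {Ω : Type*} [MeasurableSpace Ω]
    (rf rs : Ω → ℝ) (hrf : Measurable rf) (hrs : Measurable rs)
    (hrf01 : ∀ ω, rf ω = 0 ∨ rf ω = 1)
    (hrs01 : ∀ ω, rs ω ∈ Set.Icc (0 : ℝ) 1)
    (lam : ℝ) (hlam : lam ∈ Set.Ioo (0 : ℝ) 1)
    (c : ℝ)
    (π : Measure Ω) [IsProbabilityMeasure π]
    (hcπ : ∫ ω in {ω | rf ω = 0}, rs ω ∂π = c * (π {ω | rf ω = 0}).toReal) :
    ∫ ω, max (rf ω) (lam * rs ω) ∂π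
      = lam * c + (1 - lam * c) * ∫ ω, rf ω ∂π := by
  set A : Set Ω := {ω | rf ω = 0} with hA
  have hAm : MeasurableSet A := hrf (measurableSet_singleton 0)
  have hrfb : ∀ ω, |rf ω| ≤ 1 := by
    intro ω; rcases hrf01 ω with h | h <;> rw [h] <;> norm_num
  have hmb : ∀ ω, |max (rf ω) (lam * rs ω)| ≤ 1 := by
    intro ω
    have h1 := (hrs01 ω).1; have h2 := (hrs01 ω).2
    have := hrfb ω
    rw [abs_le] at *
    constructor
    · exact le_max_of_le_left this.1
    · refine max_le this.2 ?_
      nlinarith [hlam.1, hlam.2]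
  have hmeasm : Measurable fun ω => max (rf ω) (lam * rs ω) :=
    hrf.max (hrs.const_mul lam)
  have hintf : Integrable rf π :=
    (integrable_const (1 : ℝ)).mono' hrf.aestronglyMeasurable
      (Filter.Eventually.of_forall hrfb)
  have hintm : Integrable (fun ω => max (rf ω) (lam * rs ω)) π :=
    (integrable_const (1 : ℝ)).mono' hmeasm.aestronglyMeasurable
      (Filter.Eventually.of_forall hmb)
  have hintrs : Integrable rs π :=
    (integrable_const (1 : ℝ)).mono' hrs.aestronglyMeasurable
      (Filter.Eventually.of_forall (fun ω => abs_le.mpr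
        ⟨le_trans (by norm_num) (hrs01 ω).1, (hrs01 ω).2⟩))
  -- split integrals
  have hsplitm : ∫ ω, max (rf ω) (lam * rs ω) ∂π
      = (∫ ω in A, max (rf ω) (lam * rs ω) ∂π) + ∫ ω in Aᶜ, max (rf ω) (lam * rs ω) ∂π :=
    (integral_add_compl hAm hintm).symm
  have hsplitf : ∫ ω, rf ω ∂π = (∫ ω in A, rf ω ∂π) + ∫ ω in Aᶜ, rf ω ∂π :=
    (integral_add_compl hAm hintf).symm
  have hA0 : ∫ ω in A, rf ω ∂π = 0 := by
    rw [setIntegral_congr_fun hAm (g := fun _ => (0:ℝ)) (fun ω hω => hω)]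
    simp
  have hAc1 : ∫ ω in Aᶜ, rf ω ∂π = (π Aᶜ).toReal := by
    rw [setIntegral_congr_fun hAm.compl (g := fun _ => (1:ℝ))
      (fun ω hω => (hrf01 ω).resolve_left hω)]
    simp; rfl
  have hAmax : ∫ ω in A, max (rf ω) (lam * rs ω) ∂π = lam * (c * (π A).toReal) := by
    rw [setIntegral_congr_fun hAm (g := fun ω => lam * rs ω) (fun ω hω => by
      have : rf ω = 0 := hω
      rw [this, max_eq_right]
      exact mul_nonneg hlam.1.le (hrs01 ω).1)]
    rw [integral_const_mul, hcπ]
  have hAcmax : ∫ ω in Aᶜ, max (rf ω) (lam * rs ω) ∂π = (π Aᶜ).toReal := by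
    rw [setIntegral_congr_fun hAm.compl (g := fun _ => (1:ℝ)) (fun ω hω => by
      have h1 : rf ω = 1 := (hrf01 ω).resolve_left hω
      rw [h1, max_eq_left]
      nlinarith [hlam.1, hlam.2, (hrs01 ω).1, (hrs01 ω).2])]
    simp; rfl
  have hsum : (π A).toReal + (π Aᶜ).toReal = 1 := by
    have := prob_add_prob_compl (μ := π) hAm
    have h1 : π A ≠ ⊤ := measure_ne_top _ _
    have h2 : π Aᶜ ≠ ⊤ := measure_ne_top _ _
    rw [← ENNReal.toReal_add h1 h2, this]; simp
  rw [hsplitm, hsplitf, hA0, hAc1, hAmax, hAcmax]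
  linear_combination lam * c * hsum

/-- ProcessRM-max preserves strict policy order: the final-answer value of `π₁`
exceeds that of `π₂` iff the expected max-process reward does. -/
theorem processRM_max_order_iff {Ω : Type*} [MeasurableSpace Ω]
    (rf rs : Ω → ℝ) (hrf : Measurable rf) (hrs : Measurable rs)
    (hrf01 : ∀ ω, rf ω = 0 ∨ rf ω = 1)
    (hrs01 : ∀ ω, rs ω ∈ Set.Icc (0 : ℝ) 1)
    (lam : ℝ) (hlam : lam ∈ Set.Ioo (0 : ℝ) 1)
    (c : ℝ) (hc : lam * c < 1)
    (π₁ π₂ : Measure Ω) [IsProbabilityMeasure π₁] [IsProbabilityMeasure π₂]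
    (hc₁ : ∫ ω in {ω | rf ω = 0}, rs ω ∂π₁ = c * (π₁ {ω | rf ω = 0}).toReal)
    (hc₂ : ∫ ω in {ω | rf ω = 0}, rs ω ∂π₂ = c * (π₂ {ω | rf ω = 0}).toReal) :
    (∫ ω, rf ω ∂π₁) > (∫ ω, rf ω ∂π₂)
      ↔ (∫ ω, max (rf ω) (lam * rs ω) ∂π₁)
          > (∫ ω, max (rf ω) (lam * rs ω) ∂π₂) := by
  rw [aux_value_eq rf rs hrf hrs hrf01 hrs01 lam hlam c π₁ hc₁,
      aux_value_eq rf rs hrf hrs hrf01 hrs01 lam hlam c π₂ hc₂]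
  constructor <;> intro h <;> nlinarith
end

section
/- For every λ ∈ (0, 1), there exist a measurable space Ω, measurable functions r_f : Ω → ℝ taking values in {0, 1} and r_s : Ω → ℝ taking values in [0, 1], and probability measures π₁, π₂ on Ω such that ∫ r_f dπ₁ > ∫ r_f dπ₂ while ∫ (r_f(ω) + λ·r_s(ω)) dπ₁(ω) < ∫ (r_f(ω) + λ·r_s(ω)) dπ₂(ω). (ProcessRM-sum does not necessarily preserve policy order.) -/
open MeasureTheory

/-- ProcessRM-sum does not necessarily preserve policy order: for every
`λ ∈ (0,1)` there are rewards and a pair of policies ranked oppositely by the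
final-answer value and by the expected sum-process reward. -/
theorem processRM_sum_not_order_preserving (lam : ℝ)
    (hlam : lam ∈ Set.Ioo (0 : ℝ) 1) :
    ∃ (Ω : Type) (m : MeasurableSpace Ω) (rf rs : Ω → ℝ)
      (π₁ π₂ : @Measure Ω m),
      @Measurable Ω ℝ m _ rf ∧ @Measurable Ω ℝ m _ rs ∧
      (∀ ω, rf ω = 0 ∨ rf ω = 1) ∧
      (∀ ω, rs ω ∈ Set.Icc (0 : ℝ) 1) ∧
      @IsProbabilityMeasure Ω m π₁ ∧ @IsProbabilityMeasure Ω m π₂ ∧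
      (∫ ω, rf ω ∂π₁) > (∫ ω, rf ω ∂π₂) ∧
      (∫ ω, (rf ω + lam * rs ω) ∂π₁) < (∫ ω, (rf ω + lam * rs ω) ∂π₂) := by
  obtain ⟨hl0, hl1⟩ := hlam
  refine ⟨Fin 3, ⊤, (fun ω => if ω = 0 then 1 else 0), (fun ω => if ω = 2 then 1 else 0),
    ENNReal.ofReal (lam/2) • Measure.dirac 0 + ENNReal.ofReal (1 - lam/2) • Measure.dirac 1,
    Measure.dirac 2, ?_, ?_, ?_, ?_, ?_, ?_, ?_, ?_⟩
  · exact measurable_of_finite _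
  · exact measurable_of_finite _
  · intro ω; by_cases h : ω = 0 <;> simp [h]
  · intro ω; by_cases h : ω = 2 <;> simp [h]
  · constructor
    simp [Measure.add_apply, Measure.smul_apply, Measure.dirac_apply]
    rw [← ENNReal.ofReal_add (by linarith) (by linarith)]
    norm_num
  · infer_instance
  · have key : ∀ f : Fin 3 → ℝ,
      (∫ ω, f ω ∂(ENNReal.ofReal (lam/2) • Measure.dirac 0 +
        ENNReal.ofReal (1 - lam/2) • Measure.dirac (1 : Fin 3))) =
        (lam/2) * f 0 + (1 - lam/2) * f 1 := by
      intro f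
      haveI : IsFiniteMeasure (ENNReal.ofReal (lam/2) • Measure.dirac (0:Fin 3)) := ⟨by simp⟩
      haveI : IsFiniteMeasure (ENNReal.ofReal (1 - lam/2) • Measure.dirac (1:Fin 3)) := ⟨by simp⟩
      rw [integral_add_measure (.of_finite) (.of_finite),
        integral_smul_measure, integral_smul_measure, integral_dirac, integral_dirac,
        ENNReal.toReal_ofReal (by linarith), ENNReal.toReal_ofReal (by linarith)]
      simp
    rw [key, integral_dirac]
    simp only [show (2:Fin 3) ≠ 0 by decide, show (0:Fin 3) ≠ 2 by decide, show (1:Fin 3) ≠ 2 by decide, if_true, if_false, if_neg, ite_false, ite_true]; norm_num; linarith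
  · have key : ∀ f : Fin 3 → ℝ,
      (∫ ω, f ω ∂(ENNReal.ofReal (lam/2) • Measure.dirac 0 +
        ENNReal.ofReal (1 - lam/2) • Measure.dirac (1 : Fin 3))) =
        (lam/2) * f 0 + (1 - lam/2) * f 1 := by
      intro f
      haveI : IsFiniteMeasure (ENNReal.ofReal (lam/2) • Measure.dirac (0:Fin 3)) := ⟨by simp⟩
      haveI : IsFiniteMeasure (ENNReal.ofReal (1 - lam/2) • Measure.dirac (1:Fin 3)) := ⟨by simp⟩
      rw [integral_add_measure (.of_finite) (.of_finite),
        integral_smul_measure, integral_smul_measure, integral_dirac, integral_dirac,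
        ENNReal.toReal_ofReal (by linarith), ENNReal.toReal_ofReal (by linarith)]
      simp
    rw [key, integral_dirac]
    simp only [show (2:Fin 3) ≠ 0 by decide, show (0:Fin 3) ≠ 2 by decide, show (1:Fin 3) ≠ 2 by decide, if_true, if_false, if_neg, ite_false, ite_true]; norm_num; linarith
end
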